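/- Let φ : X → Y be a code between shift spaces with X a shift of finite type. If φ is right continuing, then φ has a right continuing retract. -/

import Mathlib

open Set Filter

/-- The product topology on `ℤ → A`, where the alphabet `A` carries the
discrete topology. -/
def seqTop (A : Type*) : TopologicalSpace (ℤ → A) :=
  @Pi.topologicalSpace ℤ (fun _ => A) (fun _ => ⊥)

/-- The shift map `σ`, defined by `σ(x)_i = x_{i+1}`. -/
def shiftMap {A : Type*} (x : ℤ → A) : ℤ → A := fun i => x (i + 1)

/-- A shift space: a nonempty, closed, shift-invariant subset of `A^ℤ`. -/
def IsShiftSpace {A : Type*} (X : Set (ℤ → A)) : Prop :=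
  X.Nonempty ∧ @IsClosed _ (seqTop A) X ∧ shiftMap '' X = X

/-- The word `u` occurs in `x` at coordinate `i`. -/
def OccursAt {A : Type*} (x : ℤ → A) (u : List A) (i : ℤ) : Prop :=
  ∀ k : Fin u.length, x (i + ((k : ℕ) : ℤ)) = u.get k

/-- `u` is a word of the language `B(X)` of `X`. -/
def IsWordOf {A : Type*} (X : Set (ℤ → A)) (u : List A) : Prop :=
  ∃ x ∈ X, OccursAt x u 0

/-- A shift of finite type: a shift space defined by finitely many
forbidden words. -/
def IsSFT {A : Type*} (X : Set (ℤ → A)) : Prop :=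
  IsShiftSpace X ∧ ∃ F : Finset (List A),
    X = { x | ∀ u ∈ F, ∀ i : ℤ, ¬ OccursAt x u i }

/-- A code: a continuous shift-commuting map from `X` to `Y`. -/
def IsCode {A B : Type*} (X : Set (ℤ → A)) (Y : Set (ℤ → B))
    (φ : (ℤ → A) → (ℤ → B)) : Prop :=
  Set.MapsTo φ X Y ∧ @ContinuousOn _ _ (seqTop A) (seqTop B) φ X ∧
    ∀ x ∈ X, φ (shiftMap x) = shiftMap (φ x)

/-- A factor code: a surjective code. -/
def IsFactorCode {A B : Type*} (X : Set (ℤ → A)) (Y : Set (ℤ → B))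
    (φ : (ℤ → A) → (ℤ → B)) : Prop :=
  IsCode X Y φ ∧ Y ⊆ φ '' X

/-- A code is open if it maps (relatively) open subsets of `X` to
(relatively) open subsets of `Y`. -/
def IsOpenCode {A B : Type*} (X : Set (ℤ → A)) (Y : Set (ℤ → B))
    (φ : (ℤ → A) → (ℤ → B)) : Prop :=
  ∀ U : Set (ℤ → A), @IsOpen _ (seqTop A) U →
    ∃ V : Set (ℤ → B), @IsOpen _ (seqTop B) V ∧ φ '' (X ∩ U) = Y ∩ V

/-- A code has a uniform lifting length `l`. -/
def HasUniformLiftingLength {A B : Type*} (X : Set (ℤ → A)) (Y : Set (ℤ → B))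
    (φ : (ℤ → A) → (ℤ → B)) : Prop :=
  ∃ l : ℕ, ∀ k : ℕ, ∀ x ∈ X, ∀ y ∈ Y,
    (∀ i : ℤ, |i| ≤ (k : ℤ) + (l : ℤ) → φ x i = y i) →
    ∃ x' ∈ X, (∀ i : ℤ, |i| ≤ (k : ℤ) → x' i = x i) ∧ φ x' = y

/-- Right continuing code. -/
def IsRightContinuing {A B : Type*} (X : Set (ℤ → A)) (Y : Set (ℤ → B))
    (φ : (ℤ → A) → (ℤ → B)) : Prop :=
  ∀ x ∈ X, ∀ y ∈ Y, (∃ M : ℤ, ∀ i ≤ M, φ x i = y i) →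
    ∃ x' ∈ X, (∃ M : ℤ, ∀ i ≤ M, x' i = x i) ∧ φ x' = y

/-- Left continuing code. -/
def IsLeftContinuing {A B : Type*} (X : Set (ℤ → A)) (Y : Set (ℤ → B))
    (φ : (ℤ → A) → (ℤ → B)) : Prop :=
  ∀ x ∈ X, ∀ y ∈ Y, (∃ M : ℤ, ∀ i, M ≤ i → φ x i = y i) →
    ∃ x' ∈ X, (∃ M : ℤ, ∀ i, M ≤ i → x' i = x i) ∧ φ x' = y

/-- `n` is a right continuing retract of `φ`. -/
def IsRightRetract {A B : Type*} (X : Set (ℤ → A)) (Y : Set (ℤ → B))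
    (φ : (ℤ → A) → (ℤ → B)) (n : ℕ) : Prop :=
  ∀ x ∈ X, ∀ y ∈ Y, (∀ i : ℤ, i ≤ 0 → φ x i = y i) →
    ∃ x' ∈ X, φ x' = y ∧ ∀ i : ℤ, i ≤ -(n : ℤ) → x' i = x i

/-- `n` is a left continuing retract of `φ`. -/
def IsLeftRetract {A B : Type*} (X : Set (ℤ → A)) (Y : Set (ℤ → B))
    (φ : (ℤ → A) → (ℤ → B)) (n : ℕ) : Prop :=
  ∀ x ∈ X, ∀ y ∈ Y, (∀ i : ℤ, 0 ≤ i → φ x i = y i) →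
    ∃ x' ∈ X, φ x' = y ∧ ∀ i : ℤ, (n : ℤ) ≤ i → x' i = x i

/-- Right closing code. -/
def IsRightClosing {A B : Type*} (X : Set (ℤ → A))
    (φ : (ℤ → A) → (ℤ → B)) : Prop :=
  ∀ x ∈ X, ∀ x' ∈ X, (∃ M : ℤ, ∀ i ≤ M, x i = x' i) → φ x = φ x' → x = x'

/-- Left closing code. -/
def IsLeftClosing {A B : Type*} (X : Set (ℤ → A))
    (φ : (ℤ → A) → (ℤ → B)) : Prop :=
  ∀ x ∈ X, ∀ x' ∈ X, (∃ M : ℤ, ∀ i, M ≤ i → x i = x' i) → φ x = φ x' → x = x'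

/-- A sofic shift: a factor of a shift of finite type. -/
def IsSofic {B : Type*} (Y : Set (ℤ → B)) : Prop :=
  ∃ (C : Type) (_ : Fintype C) (Z : Set (ℤ → C)) (π : (ℤ → C) → (ℤ → B)),
    IsSFT Z ∧ IsFactorCode Z Y π

/-- Irreducibility of a shift space. -/
def IsIrreducibleShift {A : Type*} (X : Set (ℤ → A)) : Prop :=
  ∀ u v : List A, IsWordOf X u → IsWordOf X v →
    ∃ w : List A, IsWordOf X (u ++ w ++ v)

/-- Mixing shift space. -/
def IsMixingShift {A : Type*} (X : Set (ℤ → A)) : Prop :=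
  ∀ u v : List A, IsWordOf X u → IsWordOf X v →
    ∃ N : ℕ, ∀ n : ℕ, N ≤ n →
      ∃ w : List A, w.length = n ∧ IsWordOf X (u ++ w ++ v)

/-- The almost specification property. -/
def AlmostSpecified {A : Type*} (X : Set (ℤ → A)) : Prop :=
  ∃ N : ℕ, ∀ u v : List A, IsWordOf X u → IsWordOf X v →
    ∃ w : List A, w.length ≤ N ∧ IsWordOf X (u ++ w ++ v)

/-- The specification property. -/
def HasSpecification {A : Type*} (X : Set (ℤ → A)) : Prop :=
  ∃ N : ℕ, ∀ u v : List A, IsWordOf X u → IsWordOf X v →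
    ∃ w : List A, w.length = N ∧ IsWordOf X (u ++ w ++ v)

/-- A synchronizing word of `X`. -/
def IsSynchronizingWord {A : Type*} (X : Set (ℤ → A)) (v : List A) : Prop :=
  IsWordOf X v ∧ ∀ u w : List A, IsWordOf X (u ++ v) → IsWordOf X (v ++ w) →
    IsWordOf X (u ++ v ++ w)

/-- A synchronized system: an irreducible shift space with a synchronizing
word. -/
def IsSynchronizedSystem {A : Type*} (X : Set (ℤ → A)) : Prop :=
  IsIrreducibleShift X ∧ ∃ v : List A, IsSynchronizingWord X v

/-- A subshift of `X`. -/
def IsSubshiftOf {A : Type*} (X' X : Set (ℤ → A)) : Prop :=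
  IsShiftSpace X' ∧ X' ⊆ X

/-- The number of words of length `n` in the language of `X`. -/
noncomputable def wordCount {A : Type*} (X : Set (ℤ → A)) (n : ℕ) : ℕ :=
  Set.ncard { u : List A | u.length = n ∧ IsWordOf X u }

/-- The entropy `h(X) = lim (1/n) log |B_n(X)|` of a shift space (the limit
exists by subadditivity, hence equals the limsup used here). -/
noncomputable def entropy {A : Type*} (X : Set (ℤ → A)) : ℝ :=
  Filter.limsup (fun n : ℕ => Real.log (wordCount X n) / (n : ℝ)) Filter.atTop

/-- The periodic condition `P(X) ↘ P(Y)`. -/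
def PeriodicCondition {A B : Type*} (X : Set (ℤ → A)) (Y : Set (ℤ → B)) : Prop :=
  ∀ n : ℕ, 0 < n → (∃ x ∈ X, shiftMap^[n] x = x) → ∃ y ∈ Y, shiftMap^[n] y = y

/-- A cyclic cover `D_0, …, D_{p-1}` of a shift space `X`. -/
def IsCyclicCover {A : Type*} (X : Set (ℤ → A)) (p : ℕ)
    (D : ZMod p → Set (ℤ → A)) : Prop :=
  0 < p ∧
  (∀ i, @IsClosed _ (seqTop A) (D i) ∧ D i ⊆ X) ∧
  (⋃ i, D i) = X ∧
  (∀ i, shiftMap '' D i = D (i + 1)) ∧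
  (∀ i, ∀ U V : Set (ℤ → A), @IsOpen _ (seqTop A) U → @IsOpen _ (seqTop A) V →
    (D i ∩ U).Nonempty → (D i ∩ V).Nonempty →
    ∃ N : ℕ, ∀ n : ℕ, N ≤ n →
      ((shiftMap^[p * n] '' (D i ∩ U)) ∩ (D i ∩ V)).Nonempty) ∧
  (∀ i j, i ≠ j → ∀ U : Set (ℤ → A), @IsOpen _ (seqTop A) U →
    X ∩ U ⊆ D i ∩ D j → X ∩ U = ∅)

/-- A left ray of `X`, recorded as `z : ℕ → A` where `z n` is the symbol at
coordinate `-(n+1)`. -/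
def IsLeftRay {A : Type*} (X : Set (ℤ → A)) (z : ℕ → A) : Prop :=
  ∃ x ∈ X, ∀ n : ℕ, x (-((n : ℤ) + 1)) = z n

/-- Append the finite word `w` on the right of a left-infinite sequence `z`
(the last symbol of `w` ends up at coordinate `-1`). -/
def rayAppend {A : Type*} (z : ℕ → A) (w : List A) : ℕ → A :=
  fun n => if h : n < w.length then w.reverse.get ⟨n, by simpa using h⟩
           else z (n - w.length)

/-- A left transitive point: every word of `X` occurs in `x_{(-∞,0]}`. -/
def IsLeftTransitive {A : Type*} (X : Set (ℤ → A)) (x : ℤ → A) : Prop :=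
  ∀ u : List A, IsWordOf X u → ∃ i : ℤ, i + (u.length : ℤ) ≤ 1 ∧ OccursAt x u i

/-- A right transitive point: every word of `X` occurs in `x_{[0,∞)}`. -/
def IsRightTransitive {A : Type*} (X : Set (ℤ → A)) (x : ℤ → A) : Prop :=
  ∀ u : List A, IsWordOf X u → ∃ i : ℤ, 0 ≤ i ∧ OccursAt x u i

/-- Right continuing almost everywhere. -/
def IsRightContinuingAE {A B : Type*} (X : Set (ℤ → A)) (Y : Set (ℤ → B))
    (φ : (ℤ → A) → (ℤ → B)) : Prop :=
  ∀ x ∈ X, IsLeftTransitive X x → ∀ y ∈ Y, (∃ M : ℤ, ∀ i ≤ M, φ x i = y i) →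
    ∃ x' ∈ X, (∃ M : ℤ, ∀ i ≤ M, x' i = x i) ∧ φ x' = y

/-- Left continuing almost everywhere. -/
def IsLeftContinuingAE {A B : Type*} (X : Set (ℤ → A)) (Y : Set (ℤ → B))
    (φ : (ℤ → A) → (ℤ → B)) : Prop :=
  ∀ x ∈ X, IsRightTransitive X x → ∀ y ∈ Y, (∃ M : ℤ, ∀ i, M ≤ i → φ x i = y i) →
    ∃ x' ∈ X, (∃ M : ℤ, ∀ i, M ≤ i → x' i = x i) ∧ φ x' = y

/-- The bi-infinite concatenations of blocks `1 0^s`, `s ∈ S`: the positions of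
`1`s in `x` form the range of a strictly monotone `t : ℤ → ℤ` whose
consecutive gaps `t (n+1) - t n` all equal `s + 1` for some `s ∈ S`. -/
def GapConcat (S : Set ℕ) : Set (ℤ → Bool) :=
  { x | ∃ t : ℤ → ℤ, StrictMono t ∧ (∀ n : ℤ, ∃ s ∈ S, t (n + 1) = t n + (s : ℤ) + 1) ∧
      (∀ i : ℤ, x i = true ↔ ∃ n : ℤ, t n = i) }

/-- The `S`-gap shift: the smallest shift space over `{0,1}` containing all
bi-infinite concatenations of blocks from `{1 0^s : s ∈ S}`. -/
def SGapShift (S : Set ℕ) : Set (ℤ → Bool) :=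
  ⋂₀ { X : Set (ℤ → Bool) | IsShiftSpace X ∧ GapConcat S ⊆ X }

/-!
A code is a sliding block code of some radius `r`, and a shift of finite type is closed under
splicing two of its points that agree on a long enough window. By compactness there is a uniform
`N` such that any `x` whose image agrees with `y` on `(-∞, 0]` can be changed on `(-N, ∞)` so that
its image agrees with `y` on `(-∞, 1]`: otherwise a limit of counterexamples, continued by right
continuation, could be spliced into a late counterexample. Applying this step at every coordinate,
shifted to the origin, and passing to a limit point yields a preimage of `y` agreeing with `x` on
`(-∞, -N]`.
-/

open Topology

section

variable {A B : Type*}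

def shiftBy (j : ℤ) (x : ℤ → A) : ℤ → A := fun i => x (i + j)

@[simp]
lemma shiftBy_apply (j : ℤ) (x : ℤ → A) (i : ℤ) : shiftBy j x i = x (i + j) := rfl

@[simp]
lemma shiftBy_zero (x : ℤ → A) : shiftBy 0 x = x := funext fun i => by simp

lemma shiftBy_add_one (j : ℤ) (x : ℤ → A) : shiftBy (j + 1) x = shiftMap (shiftBy j x) := by
  funext i
  simp only [shiftBy_apply, shiftMap, add_assoc, add_comm 1 j]

lemma shiftMap_injective : Function.Injective (shiftMap : (ℤ → A) → ℤ → A) :=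
  fun x x' h => funext fun i => by simpa [shiftMap] using congrFun h (i - 1)

section ShiftInvariant

variable {X : Set (ℤ → A)}

lemma shiftMap_mem_iff (hX : shiftMap '' X = X) {x : ℤ → A} : shiftMap x ∈ X ↔ x ∈ X := by
  conv_lhs => rw [← hX]
  exact shiftMap_injective.mem_set_image

lemma shiftBy_mem_iff (hX : shiftMap '' X = X) (j : ℤ) {x : ℤ → A} :
    shiftBy j x ∈ X ↔ x ∈ X := by
  induction j using Int.induction_on with
  | zero => simp
  | succ i ih => rw [shiftBy_add_one, shiftMap_mem_iff hX, ih]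
  | pred i ih => rw [← ih, ← shiftMap_mem_iff hX, ← shiftBy_add_one, sub_add_cancel]

lemma map_shiftBy {φ : (ℤ → A) → (ℤ → B)} (hX : shiftMap '' X = X)
    (hφ : ∀ x ∈ X, φ (shiftMap x) = shiftMap (φ x)) (j : ℤ) {x : ℤ → A} (hx : x ∈ X) :
    φ (shiftBy j x) = shiftBy j (φ x) := by
  induction j using Int.induction_on with
  | zero => simp
  | succ i ih =>
    rw [shiftBy_add_one, hφ _ ((shiftBy_mem_iff hX i).2 hx), ih, shiftBy_add_one]
  | pred i ih =>
    apply shiftMap_injective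
    rw [← hφ _ ((shiftBy_mem_iff hX _).2 hx), ← shiftBy_add_one, ← shiftBy_add_one,
      sub_add_cancel, ih]

end ShiftInvariant

def splice (c : ℤ) (u v : ℤ → A) : ℤ → A := fun i => if i ≤ c then u i else v i

lemma splice_eqOn_left (c : ℤ) (u v : ℤ → A) : EqOn (splice c u v) u (Iic c) :=
  fun _ hi => if_pos hi

lemma splice_eqOn_right {c d : ℤ} {u v : ℤ → A} (h : EqOn u v (Icc d c)) :
    EqOn (splice c u v) v (Ici d) := by
  intro i hi
  by_cases hic : i ≤ c
  · simp only [splice, if_pos hic]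
    exact h ⟨hi, hic⟩
  · simp only [splice, if_neg hic]

def IsSpliceable (X : Set (ℤ → A)) (m : ℕ) : Prop :=
  ∀ u ∈ X, ∀ v ∈ X, ∀ c : ℤ, EqOn u v (Icc (c - m) c) → splice c u v ∈ X

lemma IsSFT.exists_isSpliceable {X : Set (ℤ → A)} (hX : IsSFT X) : ∃ m, IsSpliceable X m := by
  obtain ⟨-, F, rfl⟩ := hX
  refine ⟨F.sup List.length, fun u hu v hv c huv w hw i hocc => ?_⟩
  have hlen : w.length ≤ F.sup List.length := Finset.le_sup hw
  by_cases hend : i + w.length ≤ c + 1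
  · refine hu w hw i fun k => ?_
    rw [← hocc k, splice_eqOn_left c u v (show i + k ≤ c by omega)]
  · refine hv w hw i fun k => ?_
    rw [← hocc k, splice_eqOn_right (d := c - F.sup List.length) huv (show _ ≤ i + k by omega)]

def IsSlidingBlockCode (X : Set (ℤ → A)) (φ : (ℤ → A) → (ℤ → B)) (r : ℕ) : Prop :=
  ∀ x ∈ X, ∀ x' ∈ X, ∀ j : ℤ, EqOn x x' (Icc (j - r) (j + r)) → φ x j = φ x' j

namespace IsSlidingBlockCode

variable {X : Set (ℤ → A)} {φ : (ℤ → A) → (ℤ → B)} {r : ℕ} {x x' : ℤ → A}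

lemma eqOn_Iic (hφ : IsSlidingBlockCode X φ r) (hx : x ∈ X) (hx' : x' ∈ X) {c : ℤ}
    (h : EqOn x x' (Iic c)) : EqOn (φ x) (φ x') (Iic (c - r)) :=
  fun j hj => hφ x hx x' hx' j fun i hi => h (show i ≤ c by linarith [hi.2, mem_Iic.1 hj])

lemma eqOn_Ici (hφ : IsSlidingBlockCode X φ r) (hx : x ∈ X) (hx' : x' ∈ X) {c : ℤ}
    (h : EqOn x x' (Ici c)) : EqOn (φ x) (φ x') (Ici (c + r)) :=
  fun j hj => hφ x hx x' hx' j fun i hi => h (show c ≤ i by linarith [hi.1, mem_Ici.1 hj])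

end IsSlidingBlockCode

def IsOneStepRightRetract (X : Set (ℤ → A)) (Y : Set (ℤ → B)) (φ : (ℤ → A) → (ℤ → B))
    (N : ℕ) : Prop :=
  ∀ x ∈ X, ∀ y ∈ Y, EqOn (φ x) y (Iic 0) →
    ∃ x' ∈ X, EqOn x' x (Iic (-N)) ∧ EqOn (φ x') y (Iic 1)

namespace IsOneStepRightRetract

variable {X : Set (ℤ → A)} {Y : Set (ℤ → B)} {φ : (ℤ → A) → (ℤ → B)} {N : ℕ} {x : ℤ → A}
  {y : ℤ → B}

lemma exists_eqOn_Iic_add_one (hN : IsOneStepRightRetract X Y φ N) (hX : shiftMap '' X = X)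
    (hY : shiftMap '' Y = Y) (hφ : ∀ x ∈ X, φ (shiftMap x) = shiftMap (φ x)) (hx : x ∈ X)
    (hy : y ∈ Y) {c : ℤ} (hxy : EqOn (φ x) y (Iic c)) :
    ∃ x' ∈ X, EqOn x' x (Iic (c - N)) ∧ EqOn (φ x') y (Iic (c + 1)) := by
  obtain ⟨w, hw, hwx, hwy⟩ := hN (shiftBy c x) ((shiftBy_mem_iff hX c).2 hx) (shiftBy c y)
    ((shiftBy_mem_iff hY c).2 hy) fun i hi => by
      rw [map_shiftBy hX hφ c hx]
      exact hxy (show i + c ≤ c by linarith [mem_Iic.1 hi])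
  refine ⟨shiftBy (-c) w, (shiftBy_mem_iff hX _).2 hw, fun i hi => ?_, fun i hi => ?_⟩
  · simpa using hwx (show i + -c ≤ -N by linarith [mem_Iic.1 hi])
  · rw [map_shiftBy hX hφ _ hw]
    simpa using hwy (show i + -c ≤ 1 by linarith [mem_Iic.1 hi])

lemma exists_eqOn_Iic_natCast (hN : IsOneStepRightRetract X Y φ N) (hX : shiftMap '' X = X)
    (hY : shiftMap '' Y = Y) (hφ : ∀ x ∈ X, φ (shiftMap x) = shiftMap (φ x)) (hx : x ∈ X)
    (hy : y ∈ Y) (hxy : EqOn (φ x) y (Iic 0)) (k : ℕ) :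
    ∃ z ∈ X, EqOn z x (Iic (-N)) ∧ EqOn (φ z) y (Iic k) := by
  induction k with
  | zero => exact ⟨x, hx, eqOn_refl _ _, hxy⟩
  | succ k ih =>
    obtain ⟨z, hz, hzx, hzy⟩ := ih
    obtain ⟨z', hz', hz'z, hz'y⟩ := hN.exists_eqOn_Iic_add_one hX hY hφ hz hy hzy
    exact ⟨z', hz', fun i hi => (hz'z (show i ≤ k - N by linarith [mem_Iic.1 hi])).trans (hzx hi),
      by simpa using hz'y⟩

end IsOneStepRightRetract

section Compactness

variable [TopologicalSpace A] [DiscreteTopology A]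

lemma Filter.Tendsto.eventually_eqOn {ι α : Type*} {l : Filter α} {u : α → ι → A} {p : ι → A}
    (h : Tendsto u l (𝓝 p)) {s : Set ι} (hs : s.Finite) : ∀ᶠ n in l, EqOn (u n) p s :=
  (eventually_all_finite hs).2 fun i _ => by
    simpa [nhds_discrete] using tendsto_pi_nhds.1 h i

lemma IsCompact.exists_eqOn_Icc_imp_eq [TopologicalSpace B] [DiscreteTopology B]
    {X : Set (ℤ → A)} (hX : IsCompact X) {f : (ℤ → A) → B} (hf : ContinuousOn f X) :
    ∃ r : ℕ, ∀ x ∈ X, ∀ x' ∈ X, EqOn x x' (Icc (-r) r) → f x = f x' := by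
  by_contra! h
  choose xs hxs xs' hxs' hagree hne using h
  obtain ⟨⟨p, p'⟩, ⟨hp, hp'⟩, ψ, hψ, hlim⟩ :=
    (hX.prod hX).tendsto_subseq (x := fun n => (xs n, xs' n)) fun n => ⟨hxs n, hxs' n⟩
  have hx : Tendsto (xs ∘ ψ) atTop (𝓝 p) := (continuous_fst.tendsto _).comp hlim
  have hx' : Tendsto (xs' ∘ ψ) atTop (𝓝 p') := (continuous_snd.tendsto _).comp hlim
  have hpp' : p = p' := funext fun i => by
    obtain ⟨n, hn, hn', hψn⟩ := ((hx.eventually_eqOn (finite_singleton i)).and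
      ((hx'.eventually_eqOn (finite_singleton i)).and
        (hψ.tendsto_atTop.eventually_ge_atTop i.natAbs))).exists
    rw [← hn rfl, ← hn' rfl]
    exact hagree _ ⟨by omega, by omega⟩
  subst hpp'
  have hfx : ∀ u : ℕ → ℤ → A, (∀ n, u n ∈ X) → Tendsto u atTop (𝓝 p) →
      ∀ᶠ n in atTop, f (u n) = f p := fun u hu hup => by
    simpa [nhds_discrete] using
      (hf p hp).tendsto.comp (tendsto_nhdsWithin_iff.2 ⟨hup, Eventually.of_forall hu⟩)
  obtain ⟨n, hn, hn'⟩ := ((hfx _ (fun n => hxs _) hx).and (hfx _ (fun n => hxs' _) hx')).exists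
  exact hne _ (hn.trans hn'.symm)

lemma exists_isSlidingBlockCode [TopologicalSpace B] [DiscreteTopology B] {X : Set (ℤ → A)} {φ : (ℤ → A) → (ℤ → B)} (hXc : IsCompact X)
    (hX : shiftMap '' X = X) (hφc : ContinuousOn φ X)
    (hφ : ∀ x ∈ X, φ (shiftMap x) = shiftMap (φ x)) : ∃ r, IsSlidingBlockCode X φ r := by
  obtain ⟨r, hr⟩ := hXc.exists_eqOn_Icc_imp_eq ((continuous_apply 0).comp_continuousOn hφc)
  refine ⟨r, fun x hx x' hx' j hxx' => ?_⟩
  have h := hr _ ((shiftBy_mem_iff hX j).2 hx) _ ((shiftBy_mem_iff hX j).2 hx')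
    fun i hi => hxx' ⟨by linarith [hi.1], by linarith [hi.2]⟩
  simpa [map_shiftBy hX hφ j hx, map_shiftBy hX hφ j hx'] using h

lemma IsSlidingBlockCode.exists_map_eq {X : Set (ℤ → A)} {φ : (ℤ → A) → (ℤ → B)} {r : ℕ}
    (hr : IsSlidingBlockCode X φ r)
    (hXc : IsCompact X) {s : Set ℤ} {x : ℤ → A} {y : ℤ → B}
    (h : ∀ k : ℕ, ∃ z ∈ X, EqOn z x s ∧ EqOn (φ z) y (Iic k)) :
    ∃ x' ∈ X, EqOn x' x s ∧ φ x' = y := by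
  choose zs hzs hzx hzy using h
  obtain ⟨p, hp, ψ, hψ, hlim⟩ := hXc.tendsto_subseq hzs
  refine ⟨p, hp, fun i hi => ?_, funext fun j => ?_⟩
  · obtain ⟨n, hn⟩ := (hlim.eventually_eqOn (finite_singleton i)).exists
    exact (hn rfl).symm.trans (hzx _ hi)
  · obtain ⟨n, hn, hψn⟩ := ((hlim.eventually_eqOn (finite_Icc (j - r) (j + r))).and
      (hψ.tendsto_atTop.eventually_ge_atTop j.toNat)).exists
    rw [hr p hp _ (hzs _) j fun i hi => (hn hi).symm]
    exact hzy _ (show j ≤ ψ n by omega)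

lemma IsRightContinuing.exists_isOneStepRightRetract [TopologicalSpace B] [DiscreteTopology B]
    {X : Set (ℤ → A)} {Y : Set (ℤ → B)}
    {φ : (ℤ → A) → (ℤ → B)} (hrc : IsRightContinuing X Y φ) (hXc : IsCompact X)
    (hYc : IsCompact Y) {m r : ℕ} (hm : IsSpliceable X m) (hr : IsSlidingBlockCode X φ r) :
    ∃ N, IsOneStepRightRetract X Y φ N := by
  by_contra! h
  simp only [IsOneStepRightRetract, not_forall, not_exists, not_and] at h
  choose xs hxs ys hys hxy hbad using h
  obtain ⟨⟨p, q⟩, ⟨hp, hq⟩, ψ, hψ, hlim⟩ :=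
    (hXc.prod hYc).tendsto_subseq (x := fun n => (xs n, ys n)) fun n => ⟨hxs n, hys n⟩
  have hxp : Tendsto (xs ∘ ψ) atTop (𝓝 p) := (continuous_fst.tendsto _).comp hlim
  have hyq : Tendsto (ys ∘ ψ) atTop (𝓝 q) := (continuous_snd.tendsto _).comp hlim
  have hpq : EqOn (φ p) q (Iic 0) := fun i hi => by
    obtain ⟨n, hn, hn'⟩ := ((hxp.eventually_eqOn (finite_Icc (i - r) (i + r))).and
      (hyq.eventually_eqOn (finite_singleton i))).exists
    rw [hr p hp _ (hxs _) i fun k hk => (hn hk).symm, hxy _ hi]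
    exact hn' rfl
  obtain ⟨xb, hxb, ⟨M, hM⟩, hφxb⟩ := hrc p hp q hq ⟨0, hpq⟩
  set c := min M 0
  -- a late `xs`, spliced at `c` onto the right continuation `xb`, violates `hbad`
  obtain ⟨n, hψn, hn, hn'⟩ := ((hψ.tendsto_atTop.eventually_ge_atTop (-c).toNat).and
    ((hxp.eventually_eqOn (finite_Icc (c - m - 2 * r) c)).and
      (hyq.eventually_eqOn (finite_Icc (c - m - r) 1)))).exists
  have hxxb : EqOn (xs (ψ n)) xb (Icc (c - m - 2 * r) c) :=
    fun i hi => (hn hi).trans (hM i (hi.2.trans (min_le_left _ _))).symm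
  set w := splice c (xs (ψ n)) xb
  have hw : w ∈ X := hm _ (hxs _) _ hxb c (hxxb.mono (Icc_subset_Icc_left (by omega)))
  refine hbad (ψ n) w hw ((splice_eqOn_left _ _ _).mono (Iic_subset_Iic.2 (by omega)))
    fun i hi => ?_
  by_cases hic : i ≤ c - r
  · rw [hr.eqOn_Iic hw (hxs _) (splice_eqOn_left _ _ _) hic, hxy _ (show i ≤ 0 by omega)]
  · rw [hr.eqOn_Ici hw hxb (splice_eqOn_right hxxb) (show c - m - 2 * r + r ≤ i by omega),
      hφxb]
    exact (hn' ⟨by omega, hi⟩).symm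

end Compactness

end

/-- A right continuing code on a shift of finite type has a
right continuing retract. -/
theorem rightContinuing_on_SFT_has_retract
    {A B : Type*} [Fintype A] [Fintype B]
    (X : Set (ℤ → A)) (Y : Set (ℤ → B)) (φ : (ℤ → A) → (ℤ → B))
    (hX : IsSFT X) (hY : IsShiftSpace Y) (hφ : IsCode X Y φ)
    (hrc : IsRightContinuing X Y φ) :
    ∃ n : ℕ, IsRightRetract X Y φ n := by
  let _ : TopologicalSpace A := ⊥
  let _ : TopologicalSpace B := ⊥
  have _ : DiscreteTopology A := ⟨rfl⟩
  have _ : DiscreteTopology B := ⟨rfl⟩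
  have hXc : IsCompact X := IsClosed.isCompact hX.1.2.1
  have hYc : IsCompact Y := IsClosed.isCompact hY.2.1
  obtain ⟨r, hr⟩ := exists_isSlidingBlockCode hXc hX.1.2.2 hφ.2.1 hφ.2.2
  obtain ⟨m, hm⟩ := hX.exists_isSpliceable
  obtain ⟨N, hN⟩ := hrc.exists_isOneStepRightRetract hXc hYc hm hr
  refine ⟨N, fun x hx y hy hxy => ?_⟩
  obtain ⟨x', hx', hx'x, hφx'⟩ := hr.exists_map_eq hXc
    (hN.exists_eqOn_Iic_natCast hX.1.2.2 hY.2.2 hφ.2.2 hx hy fun i hi => hxy i hi)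
  exact ⟨x', hx', hφx', fun i hi => hx'x hi⟩
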